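/- arXiv:2206.01270 — 2 statements merged into one kernel-verified Lean document; each statement's English description precedes it below -/
import Mathlib

section
/- Let S be a finite set, 0 < p ≤ 1, and x_u ≥ 0 for u ∈ S with ∑_{u∈S} x_u ≤ p. Then p - p·∏_{u∈S}(1 - x_u/p) ≥ (1 - 1/e)·∑_{u∈S} x_u. -/
open Finset

theorem stmt_3 {ι : Type*} (S : Finset ι) (p : ℝ) (hp0 : 0 < p) (hp1 : p ≤ 1)
    (x : ι → ℝ) (hx : ∀ u ∈ S, 0 ≤ x u) (hsum : ∑ u ∈ S, x u ≤ p) :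
    p - p * ∏ u ∈ S, (1 - x u / p) ≥ (1 - 1 / Real.exp 1) * ∑ u ∈ S, x u := by
  set t := ∑ u ∈ S, x u with ht
  have ht0 : 0 ≤ t := Finset.sum_nonneg hx
  set s := t / p with hs
  have hs0 : 0 ≤ s := div_nonneg ht0 hp0.le
  have hs1 : s ≤ 1 := (div_le_one hp0).2 hsum
  -- product ≤ exp(-s)
  have hprod : ∏ u ∈ S, (1 - x u / p) ≤ Real.exp (-s) := by
    have h1 : ∏ u ∈ S, (1 - x u / p) ≤ ∏ u ∈ S, Real.exp (-(x u / p)) := by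
      apply Finset.prod_le_prod
      · intro u hu
        have hxu : x u ≤ t := Finset.single_le_sum hx hu
        have : x u / p ≤ 1 := (div_le_one hp0).2 (hxu.trans hsum)
        linarith
      · intro u hu
        have := Real.add_one_le_exp (-(x u / p))
        linarith
    have h2 : ∏ u ∈ S, Real.exp (-(x u / p)) = Real.exp (-s) := by
      rw [← Real.exp_sum]
      congr 1
      rw [hs, ht, Finset.sum_div, ← Finset.sum_neg_distrib]
    linarith [h1, h2.le, h2.ge]
  -- chord inequality: exp(-s) ≤ 1 - s + s * exp(-1)
  have hchord : Real.exp (-s) ≤ 1 - s + s * Real.exp (-1) := by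
    have := convexOn_exp.2 (Set.mem_univ (0:ℝ)) (Set.mem_univ (-1:ℝ))
      (sub_nonneg.2 hs1) hs0 (by ring : (1 - s) + s = 1)
    simp only [smul_eq_mul, mul_zero, mul_neg, mul_one, zero_add, Real.exp_zero] at this
    convert this using 2 <;> ring
  have hexp1 : Real.exp (-1) = 1 / Real.exp 1 := by
    rw [Real.exp_neg]; ring
  have key : 1 - Real.exp (-s) ≥ (1 - 1 / Real.exp 1) * s := by
    rw [← hexp1]; nlinarith [hchord]
  have : p * (1 - Real.exp (-s)) ≥ p * ((1 - 1 / Real.exp 1) * s) :=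
    mul_le_mul_of_nonneg_left key hp0.le
  have hts : p * s = t := by rw [hs]; field_simp [hp0.ne']
  have hstep : p - p * ∏ u ∈ S, (1 - x u / p) ≥ p - p * Real.exp (-s) := by
    nlinarith [hprod]
  have heq : (1 - 1 / Real.exp 1) * t = p * ((1 - 1 / Real.exp 1) * s) := by
    rw [← hts]; ring
  linarith [this, hstep]
end

section
/- Let S be a finite set and for each u ∈ S let α_u ∈ [0,1) and β_u = x_u/(1-α_u) where x_u ≥ 0 and α_u + x_u ≤ 1 (so β_u ∈ [0,1]). Suppose events E_u (u ∈ S) satisfy P(E^X) ≤ ∏_{u∈X} α_u for all X ⊆ S. Then ∑_{Y ⊆ S} P(E^{S\Y}) · (∏_{u∈Y} β_u) · ∏_{u∈S\Y} (1 - β_u) ≤ ∏_{u∈S} (α_u + x_u). -/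
/-! Writing `α u + x u = β u + α u * (1 - β u)` and expanding the product over `S` gives a sum
over `Y ⊆ S` of `(∏ u ∈ Y, β u) * (∏ u ∈ S \ Y, α u) * ∏ u ∈ S \ Y, (1 - β u)`; the hypothesis
on the events bounds the corresponding term on the left termwise, since `0 ≤ β u ≤ 1`. -/

open MeasureTheory Finset

theorem sum_powerset_mul_prod_le_prod_add_mul {ι R : Type*} [DecidableEq ι] [CommRing R]
    [PartialOrder R] [IsOrderedRing R] {S : Finset ι} {f : Finset ι → R} {α p q : ι → R}
    (hf : ∀ X ⊆ S, f X ≤ ∏ u ∈ X, α u) (hp : ∀ u ∈ S, 0 ≤ p u) (hq : ∀ u ∈ S, 0 ≤ q u) :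
    ∑ Y ∈ S.powerset, f (S \ Y) * (∏ u ∈ Y, p u) * ∏ u ∈ S \ Y, q u
      ≤ ∏ u ∈ S, (p u + α u * q u) := by
  rw [prod_add]
  refine sum_le_sum fun Y hY => ?_
  have hYS : Y ⊆ S := mem_powerset.mp hY
  have hp_prod : 0 ≤ ∏ u ∈ Y, p u := prod_nonneg fun u hu => hp u (hYS hu)
  have hq_prod : 0 ≤ ∏ u ∈ S \ Y, q u := prod_nonneg fun u hu => hq u (mem_sdiff.mp hu).1
  calc f (S \ Y) * (∏ u ∈ Y, p u) * ∏ u ∈ S \ Y, q u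
      ≤ (∏ u ∈ S \ Y, α u) * (∏ u ∈ Y, p u) * ∏ u ∈ S \ Y, q u := by
        gcongr
        exact hf _ sdiff_subset
    _ = (∏ u ∈ Y, p u) * ∏ u ∈ S \ Y, α u * q u := by
        rw [prod_mul_distrib]; ring

theorem div_one_sub_add_mul_one_sub_div {α x : ℝ} (hα : α ≠ 1) :
    x / (1 - α) + α * (1 - x / (1 - α)) = α + x := by
  have : 1 - α ≠ 0 := sub_ne_zero.mpr (Ne.symm hα)
  field_simp
  ring

theorem stmt_7_general {Ω ι : Type*} [MeasurableSpace Ω] [DecidableEq ι] (μ : Measure Ω)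
    (S : Finset ι) (E : ι → Set Ω) (α x β : ι → ℝ)
    (hα1 : ∀ u ∈ S, α u < 1)
    (hx0 : ∀ u ∈ S, 0 ≤ x u) (hax : ∀ u ∈ S, α u + x u ≤ 1)
    (hβ : ∀ u ∈ S, β u = x u / (1 - α u))
    (hP : ∀ X ∈ S.powerset, (μ (⋂ u ∈ X, E u)).toReal ≤ ∏ u ∈ X, α u) :
    ∑ Y ∈ S.powerset,
        (μ (⋂ u ∈ S \ Y, E u)).toReal * (∏ u ∈ Y, β u) * ∏ u ∈ S \ Y, (1 - β u)
      ≤ ∏ u ∈ S, (α u + x u) := by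
  have hβ0 : ∀ u ∈ S, 0 ≤ β u := fun u hu => by
    rw [hβ u hu]
    exact div_nonneg (hx0 u hu) (by linarith [hα1 u hu])
  have hβ1 : ∀ u ∈ S, 0 ≤ 1 - β u := fun u hu => by
    rw [hβ u hu, sub_nonneg, div_le_one (by linarith [hα1 u hu])]
    linarith [hax u hu]
  have hsplit : ∀ u ∈ S, α u + x u = β u + α u * (1 - β u) := fun u hu => by
    rw [hβ u hu, div_one_sub_add_mul_one_sub_div (hα1 u hu).ne]
  rw [prod_congr rfl hsplit]
  exact sum_powerset_mul_prod_le_prod_add_mul (fun X hX => hP X (mem_powerset.mpr hX)) hβ0 hβ1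

theorem stmt_7 {Ω ι : Type*} [MeasurableSpace Ω] [DecidableEq ι] (μ : Measure Ω)
    [IsProbabilityMeasure μ] (S : Finset ι) (E : ι → Set Ω) (α x β : ι → ℝ)
    (hα0 : ∀ u ∈ S, 0 ≤ α u) (hα1 : ∀ u ∈ S, α u < 1)
    (hx0 : ∀ u ∈ S, 0 ≤ x u) (hax : ∀ u ∈ S, α u + x u ≤ 1)
    (hβ : ∀ u ∈ S, β u = x u / (1 - α u))
    (hP : ∀ X ∈ S.powerset, (μ (⋂ u ∈ X, E u)).toReal ≤ ∏ u ∈ X, α u) :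
    ∑ Y ∈ S.powerset,
        (μ (⋂ u ∈ S \ Y, E u)).toReal * (∏ u ∈ Y, β u) * ∏ u ∈ S \ Y, (1 - β u)
      ≤ ∏ u ∈ S, (α u + x u) :=
  stmt_7_general μ S E α x β hα1 hx0 hax hβ hP
end
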